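/- Let E₁, h₁ > 0 with E₁h₁ ≥ 2, and let h₂ ≥ (τ−1+2^{1/(E₁h₁)})/(2^{1/(E₁h₁)}−1) for a natural number τ ≥ 1. Then for all k ≥ τ, ((k−1+h₂)/(k−τ−1+h₂))^{E₁h₁} ≤ 2. -/
import Mathlib


theorem stmt_3 (E₁ h₁ h₂ : ℝ) (τ : ℕ) (hE₁ : 0 < E₁) (hh₁ : 0 < h₁) (hh₂ : 0 < h₂)
    (hEh : 2 ≤ E₁ * h₁) (hτ : 1 ≤ τ)
    (hcond : ((τ : ℝ) - 1 + 2 ^ (1 / (E₁ * h₁))) / (2 ^ (1 / (E₁ * h₁)) - 1) ≤ h₂) :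
    ∀ k : ℕ, τ ≤ k →
      (((k : ℝ) - 1 + h₂) / ((k : ℝ) - (τ : ℝ) - 1 + h₂)) ^ (E₁ * h₁) ≤ 2 := by
  intro k hk
  set p := E₁ * h₁ with hp
  have hp0 : 0 < p := lt_of_lt_of_le (by norm_num) hEh
  set c := (2 : ℝ) ^ (1 / p) with hc
  have hc1 : 1 < c := by
    rw [hc]
    exact Real.one_lt_rpow_iff_of_pos (by norm_num) |>.mpr (Or.inl ⟨by norm_num, by positivity⟩)
  have hcd : 0 < c - 1 := by linarith
  have hcond' : (τ : ℝ) - 1 + c ≤ h₂ * (c - 1) := by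
    rwa [div_le_iff₀ hcd] at hcond
  have hτ1 : (1 : ℝ) ≤ (τ : ℝ) := by exact_mod_cast hτ
  have hk1 : (τ : ℝ) ≤ (k : ℝ) := by exact_mod_cast hk
  have hh2 : 1 < h₂ := by nlinarith
  have hden : 0 < (k : ℝ) - (τ : ℝ) - 1 + h₂ := by linarith
  have hnum : 0 < (k : ℝ) - 1 + h₂ := by nlinarith
  have hratio : ((k : ℝ) - 1 + h₂) / ((k : ℝ) - (τ : ℝ) - 1 + h₂) ≤ c := by
    rw [div_le_iff₀ hden]
    nlinarith [mul_nonneg hcd.le (sub_nonneg.mpr hk1)]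
  have hratio0 : 0 ≤ ((k : ℝ) - 1 + h₂) / ((k : ℝ) - (τ : ℝ) - 1 + h₂) :=
    le_of_lt (div_pos hnum hden)
  calc (((k : ℝ) - 1 + h₂) / ((k : ℝ) - (τ : ℝ) - 1 + h₂)) ^ p
      ≤ c ^ p := Real.rpow_le_rpow hratio0 hratio hp0.le
    _ = 2 := by
        rw [hc, ← Real.rpow_mul (by norm_num), one_div, inv_mul_cancel₀ hp0.ne',
          Real.rpow_one]
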